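/- arXiv:quant-ph/0305163 — 3 statements merged into one kernel-verified Lean document; each statement's English description precedes it below -/
import Mathlib

section
/- Let ρ, j : ℝ² → ℝ be C^1 with ρ > 0 everywhere, satisfying the continuity equation ∂_t ρ + ∂_x j = 0, and suppose the velocity field u = j/ρ generates a complete flow F for ẋ = u(t,x). Denote by X_s(τ, x₀) the x-coordinate at time τ of the trajectory passing through (s, x₀). Then for all τ, s ∈ ℝ and all real numbers c ≤ d: ∫_{X_τ(s,c)}^{X_τ(s,d)} ρ(τ,ξ) dξ = ∫_c^d ρ(s,ξ) dξ. -/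
/-
The current 1-form `ρ dx - j dt` is closed by the continuity equation, so it has a primitive on the
plane, `P t x = ∫₀ˣ ρ(t, ξ) dξ - ∫₀ᵗ j(r, 0) dr` (`fluxPotential` below), with `∂ₓP = ρ` and
`∂ₜP = -j`. Along a trajectory of `ẋ = j / ρ` the derivative of `P` is `-j + ρ · (j / ρ) = 0`, so
`P` is constant on trajectories, and the mass `∫ ρ(τ, ·)` of an interval is the difference of the
values of `P` at its endpoints.
-/

open Set MeasureTheory intervalIntegral Filter

section PartialDerivatives

variable {E : Type*} [NormedAddCommGroup E] [NormedSpace ℝ E] {f : ℝ × ℝ → E}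

theorem ContDiff.hasDerivAt_comp_prodMk_fst (hf : ContDiff ℝ 1 f) (t x : ℝ) :
    HasDerivAt (fun t' => f (t', x)) (fderiv ℝ f (t, x) (1, 0)) t :=
  (hf.differentiable one_ne_zero (t, x)).hasFDerivAt.comp_hasDerivAt t
    ((hasDerivAt_id t).prodMk (hasDerivAt_const t x))

theorem ContDiff.hasDerivAt_comp_prodMk_snd (hf : ContDiff ℝ 1 f) (t x : ℝ) :
    HasDerivAt (fun x' => f (t, x')) (fderiv ℝ f (t, x) (0, 1)) x :=
  (hf.differentiable one_ne_zero (t, x)).hasFDerivAt.comp_hasDerivAt x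
    ((hasDerivAt_const x t).prodMk (hasDerivAt_id x))

theorem ContDiff.continuous_fderiv_apply_const (hf : ContDiff ℝ 1 f) (v : ℝ × ℝ) :
    Continuous fun p => fderiv ℝ f p v :=
  (hf.continuous_fderiv one_ne_zero).clm_apply continuous_const

theorem ContDiff.hasDerivAt_intervalIntegral_fst (hf : ContDiff ℝ 1 f) (a b t : ℝ) :
    HasDerivAt (fun t' => ∫ ξ in a..b, f (t', ξ)) (∫ ξ in a..b, fderiv ℝ f (t, ξ) (1, 0)) t := by
  have hf' := hf.continuous_fderiv_apply_const (1, 0)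
  obtain ⟨C, hC⟩ := ((isCompact_closedBall t 1).prod isCompact_uIcc).exists_bound_of_continuousOn
    (s := Metric.closedBall t 1 ×ˢ uIcc a b) hf'.continuousOn
  refine (hasDerivAt_integral_of_dominated_loc_of_deriv_le (Metric.ball_mem_nhds t one_pos)
    (Eventually.of_forall fun t' =>
      (hf.continuous.comp (Continuous.prodMk_right t')).aestronglyMeasurable)
    ((hf.continuous.comp (Continuous.prodMk_right t)).intervalIntegrable a b)
    (hf'.comp (Continuous.prodMk_right t)).aestronglyMeasurable
    (bound := fun _ => C) ?_ intervalIntegrable_const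
    (Eventually.of_forall fun ξ _ t' _ => hf.hasDerivAt_comp_prodMk_fst t' ξ)).2
  exact Eventually.of_forall fun ξ hξ t' ht' =>
    hC (t', ξ) ⟨Metric.ball_subset_closedBall ht', uIoc_subset_uIcc hξ⟩

end PartialDerivatives

noncomputable def fluxPotential (ρ j : ℝ × ℝ → ℝ) (t x : ℝ) : ℝ :=
  (∫ ξ in 0..x, ρ (t, ξ)) - ∫ r in 0..t, j (r, 0)

section FluxPotential

variable {ρ j : ℝ × ℝ → ℝ}

theorem intervalIntegral_eq_fluxPotential_sub (hρ : Continuous ρ) (t a b : ℝ) :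
    ∫ ξ in a..b, ρ (t, ξ) = fluxPotential ρ j t b - fluxPotential ρ j t a := by
  have hint : ∀ u v, IntervalIntegrable (fun ξ => ρ (t, ξ)) volume u v := fun u v =>
    (hρ.comp (Continuous.prodMk_right t)).intervalIntegrable u v
  rw [fluxPotential, fluxPotential, ← integral_interval_sub_left (hint 0 b) (hint 0 a)]
  ring

theorem hasDerivAt_fluxPotential_snd (hρ : Continuous ρ) (t x : ℝ) :
    HasDerivAt (fluxPotential ρ j t) (ρ (t, x)) x := by
  have hρt : Continuous fun ξ => ρ (t, ξ) := hρ.comp (Continuous.prodMk_right t)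
  exact (integral_hasDerivAt_right (hρt.intervalIntegrable 0 x)
    (hρt.stronglyMeasurableAtFilter _ _) hρt.continuousAt).sub_const _

theorem hasDerivAt_fluxPotential_fst (hρ : ContDiff ℝ 1 ρ) (hj : ContDiff ℝ 1 j)
    (hcont : ∀ p : ℝ × ℝ, fderiv ℝ ρ p (1, 0) + fderiv ℝ j p (0, 1) = 0) (t x : ℝ) :
    HasDerivAt (fluxPotential ρ j · x) (-j (t, x)) t := by
  have hj0 : Continuous fun r => j (r, 0) := hj.continuous.comp (Continuous.prodMk_left 0)
  have hflux : ∫ ξ in 0..x, fderiv ℝ ρ (t, ξ) (1, 0) = -(j (t, x) - j (t, 0)) := by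
    rw [← integral_eq_sub_of_hasDerivAt (fun ξ _ => hj.hasDerivAt_comp_prodMk_snd t ξ)
      (((hj.continuous_fderiv_apply_const (0, 1)).comp
        (Continuous.prodMk_right t)).intervalIntegrable _ _), ← intervalIntegral.integral_neg]
    exact integral_congr fun ξ _ => eq_neg_of_add_eq_zero_left (hcont (t, ξ))
  have := (hρ.hasDerivAt_intervalIntegral_fst 0 x t).fun_sub
    (integral_hasDerivAt_right (hj0.intervalIntegrable 0 t)
      (hj0.stronglyMeasurableAtFilter _ _) hj0.continuousAt)
  rwa [hflux, neg_sub, sub_sub_cancel_left] at this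

theorem hasStrictFDerivAt_fluxPotential (hρ : ContDiff ℝ 1 ρ) (hj : ContDiff ℝ 1 j)
    (hcont : ∀ p : ℝ × ℝ, fderiv ℝ ρ p (1, 0) + fderiv ℝ j p (0, 1) = 0) (p : ℝ × ℝ) :
    HasStrictFDerivAt ↿(fluxPotential ρ j)
      ((ContinuousLinearMap.toSpanSingleton ℝ (-j p)).coprod
        (ContinuousLinearMap.toSpanSingleton ℝ (ρ p))) p :=
  hasStrictFDerivAt_uncurry_coprod
    (f₁ := fun t x => ContinuousLinearMap.toSpanSingleton ℝ (-j (t, x)))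
    (f₂ := fun t x => ContinuousLinearMap.toSpanSingleton ℝ (ρ (t, x)))
    (Eventually.of_forall fun q => hasDerivAt_fluxPotential_fst hρ hj hcont q.1 q.2)
    (Eventually.of_forall fun q => hasDerivAt_fluxPotential_snd hρ.continuous q.1 q.2)
    (ContinuousLinearMap.toSpanSingletonCLE.continuous.comp hj.continuous.neg).continuousAt
    (ContinuousLinearMap.toSpanSingletonCLE.continuous.comp hρ.continuous).continuousAt

theorem fluxPotential_eq_of_hasDerivAt (hρ : ContDiff ℝ 1 ρ) (hj : ContDiff ℝ 1 j)
    (hcont : ∀ p : ℝ × ℝ, fderiv ℝ ρ p (1, 0) + fderiv ℝ j p (0, 1) = 0)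
    (hρpos : ∀ p, 0 < ρ p) {γ : ℝ → ℝ}
    (hγ : ∀ t, HasDerivAt γ (j (t, γ t) / ρ (t, γ t)) t) (t s : ℝ) :
    fluxPotential ρ j t (γ t) = fluxPotential ρ j s (γ s) := by
  have hderiv : ∀ r, HasDerivAt (fun r => fluxPotential ρ j r (γ r)) 0 r := fun r => by
    have hchain := (hasStrictFDerivAt_fluxPotential hρ hj hcont (r, γ r)).hasFDerivAt
      |>.comp_hasDerivAt r ((hasDerivAt_id r).prodMk (hγ r))
    rwa [ContinuousLinearMap.coprod_apply, ContinuousLinearMap.toSpanSingleton_apply,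
      ContinuousLinearMap.toSpanSingleton_apply, smul_eq_mul, smul_eq_mul,
      div_mul_cancel₀ _ (hρpos (r, γ r)).ne', one_mul, neg_add_cancel] at hchain
  exact is_const_of_deriv_eq_zero (fun r => (hderiv r).differentiableAt)
    (fun r => (hderiv r).deriv) t s

end FluxPotential

/-- Conservation of probability along the Bohmian flow.
If ρ, j are C^1, ρ > 0, the continuity equation ∂_t ρ + ∂_x j = 0 holds,
and X τ s x₀ is the x-coordinate at time τ of the trajectory of
ẋ = (j/ρ)(t,x) passing through (s, x₀), then the probability content of a
transported interval is conserved between time slices. -/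
theorem bohmian_probability_conservation
    (ρ j : ℝ × ℝ → ℝ)
    (hρ : ContDiff ℝ 1 ρ) (hj : ContDiff ℝ 1 j)
    (hρpos : ∀ p, 0 < ρ p)
    (hcont : ∀ p : ℝ × ℝ, fderiv ℝ ρ p (1, 0) + fderiv ℝ j p (0, 1) = 0)
    (X : ℝ → ℝ → ℝ → ℝ)
    (hXinit : ∀ s x₀, X s s x₀ = x₀)
    (hXode : ∀ s x₀ τ, HasDerivAt (fun τ' => X τ' s x₀)
      (j (τ, X τ s x₀) / ρ (τ, X τ s x₀)) τ) :
    ∀ (τ s : ℝ) (c d : ℝ), c ≤ d →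
      (∫ ξ in (X τ s c)..(X τ s d), ρ (τ, ξ)) = ∫ ξ in c..d, ρ (s, ξ) := by
  intro τ s c d _
  have hconserved : ∀ x₀, fluxPotential ρ j τ (X τ s x₀) = fluxPotential ρ j s x₀ := fun x₀ => by
    rw [fluxPotential_eq_of_hasDerivAt hρ hj hcont hρpos (hXode s x₀) τ s, hXinit]
  rw [intervalIntegral_eq_fluxPotential_sub (j := j) hρ.continuous,
    intervalIntegral_eq_fluxPotential_sub (j := j) hρ.continuous, hconserved, hconserved]
end

section
/- Let ρ, j be C^1 on ℝ² with ρ > 0, satisfying ∂_t ρ + ∂_x j = 0, with complete Bohmian flow. Fix a ∈ ℝ and let X₀(t,a) denote the x-coordinate at time 0 of the trajectory through (t,a). Then for all t ≥ 0: ∫_{X₀(t,a)}^{a'} ρ(0,ξ) dξ = ∫_0^t j(s,a) ds, where a' = X₀(0,a) = a. Equivalently, ∫_{X₀(t,a)}^{a} ρ(0,ξ) dξ = ∫_0^t j(s,a) ds. -/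
/-!
The form `J = ρ dx − j dt` is closed by the continuity equation, so it has the potential
`ψ(s, y) = ∫_a^y ρ(s, ξ) dξ − ∫_0^s j(σ, a) dσ`, with `∂ₛψ = −j` and `∂ᵧψ = ρ`.
Along the Bohmian velocity field `(1, j/ρ)` the derivative of `ψ` is `−j + ρ · j/ρ = 0`,
so `ψ` takes the same value at `(t, a)` and at `(0, X₀(t, a))`, which is the claimed identity.
-/

open Set MeasureTheory intervalIntegral

theorem DifferentiableAt.hasDerivAt_comp_prodMk_left {E : Type*} [NormedAddCommGroup E]
    [NormedSpace ℝ E] {f : ℝ × ℝ → E} {s ξ : ℝ} (hf : DifferentiableAt ℝ f (s, ξ)) :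
    HasDerivAt (fun σ => f (σ, ξ)) (fderiv ℝ f (s, ξ) (1, 0)) s :=
  hf.hasFDerivAt.comp_hasDerivAt s ((hasDerivAt_id s).prodMk (hasDerivAt_const s ξ))

theorem DifferentiableAt.hasDerivAt_comp_prodMk_right {E : Type*} [NormedAddCommGroup E]
    [NormedSpace ℝ E] {f : ℝ × ℝ → E} {s ξ : ℝ} (hf : DifferentiableAt ℝ f (s, ξ)) :
    HasDerivAt (fun η => f (s, η)) (fderiv ℝ f (s, ξ) (0, 1)) ξ :=
  hf.hasFDerivAt.comp_hasDerivAt ξ ((hasDerivAt_const ξ s).prodMk (hasDerivAt_id ξ))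

theorem hasDerivAt_intervalIntegral_of_continuous_partial {E : Type*} [NormedAddCommGroup E]
    [NormedSpace ℝ E] {f f' : ℝ × ℝ → E} (hf : Continuous f) (hf' : Continuous f')
    (hd : ∀ s ξ, HasDerivAt (fun σ => f (σ, ξ)) (f' (s, ξ)) s) (a b s₀ : ℝ) :
    HasDerivAt (fun s => ∫ ξ in a..b, f (s, ξ)) (∫ ξ in a..b, f' (s₀, ξ)) s₀ := by
  obtain ⟨C, hC⟩ : ∃ C, ∀ q ∈ Icc (s₀ - 1) (s₀ + 1) ×ˢ uIcc a b, ‖f' q‖ ≤ C :=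
    (isCompact_Icc.prod isCompact_uIcc).exists_bound_of_continuousOn hf'.continuousOn
  exact (hasDerivAt_integral_of_dominated_loc_of_deriv_le (bound := fun _ => C)
    (Icc_mem_nhds (sub_one_lt s₀) (lt_add_one s₀))
    (.of_forall fun s => (hf.comp (.prodMk_right s)).aestronglyMeasurable)
    ((hf.comp (.prodMk_right s₀)).intervalIntegrable a b)
    (hf'.comp (.prodMk_right s₀)).aestronglyMeasurable
    (.of_forall fun ξ hξ s hs => hC (s, ξ) ⟨hs, Ioc_subset_Icc_self hξ⟩)
    intervalIntegrable_const (.of_forall fun ξ _ s _ => hd s ξ)).2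

theorem comp_integral_curve_const {E F : Type*} [NormedAddCommGroup E] [NormedSpace ℝ E]
    [NormedAddCommGroup F] [NormedSpace ℝ F] {ψ : E → F} {ψ' : E → E →L[ℝ] F} {v : E → E}
    {γ : ℝ → E} (hψ : ∀ q, HasFDerivAt ψ (ψ' q) q) (hv : ∀ q, ψ' q (v q) = 0)
    (hγ : ∀ τ, HasDerivAt γ (v (γ τ)) τ) (τ₀ τ₁ : ℝ) : ψ (γ τ₀) = ψ (γ τ₁) := by
  have hd (τ : ℝ) : HasDerivAt (ψ ∘ γ) 0 τ := by
    simpa [hv] using (hψ (γ τ)).comp_hasDerivAt τ (hγ τ)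
  exact is_const_of_deriv_eq_zero (fun τ => (hd τ).differentiableAt) (fun τ => (hd τ).deriv)
    τ₀ τ₁

theorem fst_eq_add_of_hasDerivAt {E : Type*} [NormedAddCommGroup E] [NormedSpace ℝ E]
    {γ : ℝ → ℝ × E} {w : ℝ → E} (hγ : ∀ τ, HasDerivAt γ (1, w τ) τ) (τ : ℝ) :
    (γ τ).1 = (γ 0).1 + τ := by
  have hd (σ : ℝ) : HasDerivAt (fun σ => (γ σ).1 - σ) 0 σ := by
    simpa using (hasFDerivAt_fst.comp_hasDerivAt σ (hγ σ)).fun_sub (hasDerivAt_id σ)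
  have := is_const_of_deriv_eq_zero (fun σ => (hd σ).differentiableAt) (fun σ => (hd σ).deriv) τ 0
  simp only [sub_zero] at this
  linarith

noncomputable def streamFunction (ρ j : ℝ × ℝ → ℝ) (a : ℝ) (p : ℝ × ℝ) : ℝ :=
  (∫ ξ in a..p.2, ρ (p.1, ξ)) - ∫ σ in (0 : ℝ)..p.1, j (σ, a)

section StreamFunction

variable {ρ j : ℝ × ℝ → ℝ}

theorem hasDerivAt_integral_of_continuity_equation (hρ : ContDiff ℝ 1 ρ) (hj : ContDiff ℝ 1 j)
    (hcont : ∀ p : ℝ × ℝ, fderiv ℝ ρ p (1, 0) + fderiv ℝ j p (0, 1) = 0) (a y s : ℝ) :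
    HasDerivAt (fun σ => ∫ ξ in a..y, ρ (σ, ξ)) (j (s, a) - j (s, y)) s := by
  have hDj : Continuous fun q : ℝ × ℝ => fderiv ℝ j q (0, 1) :=
    (hj.continuous_fderiv one_ne_zero).clm_apply continuous_const
  have hflux : ∫ ξ in a..y, fderiv ℝ ρ (s, ξ) (1, 0) = j (s, a) - j (s, y) := by
    simp_rw [eq_neg_of_add_eq_zero_left (hcont _), intervalIntegral.integral_neg]
    rw [integral_eq_sub_of_hasDerivAt
      (fun ξ _ => (hj.differentiable one_ne_zero _).hasDerivAt_comp_prodMk_right)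
      ((hDj.comp (.prodMk_right s)).intervalIntegrable a y)]
    ring
  rw [← hflux]
  exact hasDerivAt_intervalIntegral_of_continuous_partial hρ.continuous
    ((hρ.continuous_fderiv one_ne_zero).clm_apply continuous_const)
    (fun _ _ => (hρ.differentiable one_ne_zero _).hasDerivAt_comp_prodMk_left) a y s

theorem hasFDerivAt_streamFunction (hρ : ContDiff ℝ 1 ρ) (hj : ContDiff ℝ 1 j)
    (hcont : ∀ p : ℝ × ℝ, fderiv ℝ ρ p (1, 0) + fderiv ℝ j p (0, 1) = 0) (a : ℝ) (p : ℝ × ℝ) :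
    HasFDerivAt (streamFunction ρ j a)
      ((ContinuousLinearMap.toSpanSingleton ℝ (-j p)).coprod
        (ContinuousLinearMap.toSpanSingleton ℝ (ρ p))) p := by
  have h₁ (s y : ℝ) : HasDerivAt (fun σ => streamFunction ρ j a (σ, y)) (-j (s, y)) s := by
    simpa [streamFunction] using
      (hasDerivAt_integral_of_continuity_equation hρ hj hcont a y s).fun_sub
        ((hj.continuous.comp (.prodMk_left a)).integral_hasStrictDerivAt 0 s).hasDerivAt
  have h₂ (s y : ℝ) : HasDerivAt (fun η => streamFunction ρ j a (s, η)) (ρ (s, y)) y := by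
    simpa [streamFunction] using ((hρ.continuous.comp (.prodMk_right s)).integral_hasStrictDerivAt
      a y).hasDerivAt.sub_const (∫ σ in (0 : ℝ)..s, j (σ, a))
  have hc {g : ℝ × ℝ → ℝ} (hg : Continuous g) :
      Continuous fun q => ContinuousLinearMap.toSpanSingleton ℝ (g q) := by
    simp_rw [← ContinuousLinearMap.smulRight_one_eq_toSpanSingleton]
    fun_prop
  exact (hasStrictFDerivAt_uncurry_coprod (f := fun s y => streamFunction ρ j a (s, y))
    (f₁ := fun s y => ContinuousLinearMap.toSpanSingleton ℝ (-j (s, y)))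
    (f₂ := fun s y => ContinuousLinearMap.toSpanSingleton ℝ (ρ (s, y)))
    (.of_forall fun q => (h₁ q.1 q.2).hasFDerivAt) (.of_forall fun q => (h₂ q.1 q.2).hasFDerivAt)
    (hc hj.continuous.neg).continuousAt (hc hρ.continuous).continuousAt).hasFDerivAt

end StreamFunction

theorem bohmian_stokes_endpoint_general
    (ρ j : ℝ × ℝ → ℝ)
    (hρ : ContDiff ℝ 1 ρ) (hj : ContDiff ℝ 1 j)
    (hρpos : ∀ p, 0 < ρ p)
    (hcont : ∀ p : ℝ × ℝ, fderiv ℝ ρ p (1, 0) + fderiv ℝ j p (0, 1) = 0)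
    (F : ℝ → ℝ × ℝ → ℝ × ℝ)
    (hF0 : ∀ p, F 0 p = p)
    (hFode : ∀ (p : ℝ × ℝ) (s : ℝ),
      HasDerivAt (fun τ => F τ p) ((1 : ℝ), j (F s p) / ρ (F s p)) s)
    (X₀ : ℝ → ℝ → ℝ)
    (hX₀ : ∀ t a, X₀ t a = (F (-t) (t, a)).2) :
    ∀ (a : ℝ) (t : ℝ), 0 ≤ t →
      (∫ ξ in (X₀ t a)..a, ρ (0, ξ)) = ∫ s in (0:ℝ)..t, j (s, a) := by
  intro a t _
  have hdψ_velocity : ∀ q : ℝ × ℝ,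
      (ContinuousLinearMap.toSpanSingleton ℝ (-j q)).coprod
        (ContinuousLinearMap.toSpanSingleton ℝ (ρ q)) (1, j q / ρ q) = 0 := fun q => by
    simp [div_mul_cancel₀ _ (hρpos q).ne']
  have hconst := comp_integral_curve_const (hasFDerivAt_streamFunction hρ hj hcont a) hdψ_velocity
    (hFode (t, a)) (-t) 0
  have hstart : F (-t) (t, a) = (0, X₀ t a) :=
    Prod.ext (by simp [fst_eq_add_of_hasDerivAt (hFode (t, a)), hF0]) (hX₀ t a).symm
  rw [hstart, hF0] at hconst
  simp only [streamFunction, integral_same, sub_zero, zero_sub] at hconst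
  rw [integral_symm, hconst, neg_neg]

/-- Stokes' theorem for the closed current form J = ρ dx − j dt:
with X₀(t,a) the time-0 x-coordinate of the Bohmian trajectory through (t,a),
∫_{X₀(t,a)}^{a} ρ(0,ξ) dξ = ∫_0^t j(s,a) ds for all t ≥ 0. -/
theorem bohmian_stokes_endpoint
    (ρ j : ℝ × ℝ → ℝ)
    (hρ : ContDiff ℝ 1 ρ) (hj : ContDiff ℝ 1 j)
    (hρpos : ∀ p, 0 < ρ p)
    (hcont : ∀ p : ℝ × ℝ, fderiv ℝ ρ p (1, 0) + fderiv ℝ j p (0, 1) = 0)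
    (F : ℝ → ℝ × ℝ → ℝ × ℝ)
    (hF0 : ∀ p, F 0 p = p)
    (hFgroup : ∀ r s p, F r (F s p) = F (r + s) p)
    (hFode : ∀ (p : ℝ × ℝ) (s : ℝ),
      HasDerivAt (fun τ => F τ p) ((1 : ℝ), j (F s p) / ρ (F s p)) s)
    (X₀ : ℝ → ℝ → ℝ)
    (hX₀ : ∀ t a, X₀ t a = (F (-t) (t, a)).2) :
    ∀ (a : ℝ) (t : ℝ), 0 ≤ t →
      (∫ ξ in (X₀ t a)..a, ρ (0, ξ)) = ∫ s in (0:ℝ)..t, j (s, a) :=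
  bohmian_stokes_endpoint_general ρ j hρ hj hρpos hcont F hF0 hFode X₀ hX₀
end

section
/- Point-detector density formula: Let f : [0,∞) → ℝ be C^1 with f(0)=0 and define M(τ) = max_{[0,τ]} f + max_{[0,τ]}(−f). Then M is locally absolutely continuous and for almost every τ > 0, M'(τ) = f'(τ)·𝟙[f(τ) = max_{[0,τ]} f] − f'(τ)·𝟙[−f(τ) = max_{[0,τ]}(−f)], where 𝟙 denotes the indicator of the stated condition. -/
open Set MeasureTheory Filter Topology

/-!
The running maximum `R τ = sup_{[a, τ]} f` of a continuous `f` is monotone on `[a, ∞)`, hence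
differentiable almost everywhere, and it inherits any Lipschitz constant of `f` on `[a, T]`,
because `R t - R s ≤ max_{[s, t]} f - f s` for `s ≤ t`. Where `f τ < R τ` the maximum is not
approached near `τ`, so `R` is locally constant there; where `f τ = R τ` the function
`R - f ≥ 0` has a local minimum at `τ`, so `R' τ = f' τ` whenever `R` is differentiable at `τ`.
Applying this to `f` and `-f` gives the theorem.
-/

noncomputable def runningMax (f : ℝ → ℝ) (a τ : ℝ) : ℝ := sSup (f '' Icc a τ)

section RunningMax

variable {f : ℝ → ℝ} {a : ℝ}

theorem le_runningMax (hf : Continuous f) {s τ : ℝ} (hs : s ∈ Icc a τ) :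
    f s ≤ runningMax f a τ :=
  le_csSup (isCompact_Icc.image hf).bddAbove (mem_image_of_mem f hs)

theorem runningMax_le {τ c : ℝ} (hτ : a ≤ τ) (h : ∀ s ∈ Icc a τ, f s ≤ c) :
    runningMax f a τ ≤ c :=
  csSup_le ((nonempty_Icc.2 hτ).image f) (forall_mem_image.2 h)

theorem runningMax_lt_iff (hf : Continuous f) {τ c : ℝ} (hτ : a ≤ τ) :
    runningMax f a τ < c ↔ ∀ s ∈ Icc a τ, f s < c :=
  isCompact_Icc.sSup_lt_iff_of_continuous (nonempty_Icc.2 hτ) hf.continuousOn c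

theorem runningMax_eq_max (hf : Continuous f) {b c : ℝ} (hab : a ≤ b) (hbc : b ≤ c) :
    runningMax f a c = max (runningMax f a b) (runningMax f b c) := by
  rw [runningMax, ← Icc_union_Icc_eq_Icc hab hbc, image_union,
    csSup_union (isCompact_Icc.image hf).bddAbove ((nonempty_Icc.2 hab).image f)
      (isCompact_Icc.image hf).bddAbove ((nonempty_Icc.2 hbc).image f)]
  rfl

theorem runningMax_monotoneOn (hf : Continuous f) : MonotoneOn (runningMax f a) (Ici a) :=
  fun _ hs _ _ hst => (runningMax_eq_max hf hs hst).symm ▸ le_max_left _ _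

theorem lipschitzOnWith_runningMax (hf : Continuous f) {K : NNReal} {T : ℝ}
    (hK : LipschitzOnWith K f (Icc a T)) : LipschitzOnWith K (runningMax f a) (Icc a T) := by
  refine LipschitzOnWith.of_le_add_mul K fun t ht s hs => ?_
  have hdist : 0 ≤ K * dist t s := by positivity
  rcases le_total t s with hts | hst
  · exact (runningMax_monotoneOn hf ht.1 hs.1 hts).trans (le_add_of_nonneg_right hdist)
  rw [runningMax_eq_max hf hs.1 hst]
  refine max_le (le_add_of_nonneg_right hdist) (runningMax_le hst fun u hu => ?_)
  have hut : dist u s ≤ dist t s := by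
    rw [Real.dist_eq, Real.dist_eq, abs_of_nonneg (by linarith [hu.1]),
      abs_of_nonneg (by linarith [hu.1, hu.2])]
    linarith [hu.2]
  calc f u ≤ f s + K * dist u s := hK.le_add_mul ⟨hs.1.trans hu.1, hu.2.trans ht.2⟩ hs
    _ ≤ runningMax f a s + K * dist t s := by
      gcongr
      exact le_runningMax hf ⟨hs.1, le_rfl⟩

theorem runningMax_eventuallyEq_of_lt (hf : Continuous f) {τ : ℝ} (hτ : a < τ)
    (hlt : f τ < runningMax f a τ) :
    runningMax f a =ᶠ[𝓝 τ] fun _ => runningMax f a τ := by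
  obtain ⟨l, u, ⟨hlτ, hτu⟩, hsub⟩ :=
    ((hf.continuousAt.eventually_lt_const hlt).and (eventually_gt_nhds hτ)).exists_Ioo_subset
  obtain ⟨b, hlb, hbτ⟩ := exists_between hlτ
  have hab : a < b := (hsub ⟨hlb, hbτ.trans hτu⟩).2
  have hf_lt : ∀ {t}, t < u → ∀ s ∈ Icc b t, f s < runningMax f a τ :=
    fun ht s hs => (hsub ⟨hlb.trans_le hs.1, hs.2.trans_lt ht⟩).1
  have hab_eq : runningMax f a b = runningMax f a τ := by
    have hbτ_lt := (runningMax_lt_iff hf hbτ.le).2 (hf_lt hτu)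
    have hsplit := runningMax_eq_max hf hab.le hbτ.le
    exact ((max_eq_iff.1 hsplit.symm).resolve_right fun h => hbτ_lt.ne h.1).1
  filter_upwards [Ioo_mem_nhds hbτ hτu] with t ht
  rw [runningMax_eq_max hf hab.le ht.1.le, hab_eq]
  exact max_eq_left ((runningMax_lt_iff hf ht.1.le).2 (hf_lt ht.2)).le

theorem hasDerivAt_runningMax_of_lt (hf : Continuous f) {τ : ℝ} (hτ : a < τ)
    (hlt : f τ < runningMax f a τ) : HasDerivAt (runningMax f a) 0 τ :=
  (hasDerivAt_const τ _).congr_of_eventuallyEq (runningMax_eventuallyEq_of_lt hf hτ hlt)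

theorem hasDerivAt_runningMax_of_eq (hf : Continuous f) {τ d : ℝ} (hτ : a < τ)
    (heq : f τ = runningMax f a τ) (hR : DifferentiableAt ℝ (runningMax f a) τ)
    (hd : HasDerivAt f d τ) : HasDerivAt (runningMax f a) d τ := by
  have hmin : IsLocalMin (fun t => runningMax f a t - f t) τ := by
    filter_upwards [eventually_gt_nhds hτ] with t ht
    rw [← heq, sub_self, sub_nonneg]
    exact le_runningMax hf ⟨ht.le, le_rfl⟩
  have hderiv_eq := sub_eq_zero.1 (hmin.hasDerivAt_eq_zero (hR.hasDerivAt.sub hd))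
  exact hderiv_eq ▸ hR.hasDerivAt

theorem hasDerivAt_runningMax (hf : Continuous f) {τ d : ℝ} (hτ : a < τ)
    (hR : DifferentiableAt ℝ (runningMax f a) τ) (hd : HasDerivAt f d τ) :
    HasDerivAt (runningMax f a) (if f τ = runningMax f a τ then d else 0) τ := by
  split_ifs with heq
  · exact hasDerivAt_runningMax_of_eq hf hτ heq hR hd
  · exact hasDerivAt_runningMax_of_lt hf hτ ((le_runningMax hf ⟨hτ.le, le_rfl⟩).lt_of_ne heq)

theorem ae_hasDerivAt_runningMax {f' : ℝ → ℝ} (hd : ∀ s, HasDerivAt f (f' s) s) :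
    ∀ᵐ τ ∂volume.restrict (Ioi a),
      HasDerivAt (runningMax f a) (if f τ = runningMax f a τ then f' τ else 0) τ := by
  have hf : Continuous f := continuous_iff_continuousAt.2 fun s => (hd s).continuousAt
  have hmono := (runningMax_monotoneOn hf (a := a)).mono Ioi_subset_Ici_self
  filter_upwards [hmono.ae_differentiableWithinAt measurableSet_Ioi,
    ae_restrict_mem measurableSet_Ioi] with τ hR hτ
  exact hasDerivAt_runningMax hf hτ (hR.differentiableAt (Ioi_mem_nhds hτ)) (hd τ)

end RunningMax

theorem point_detector_density_formula_general
    (f f' : ℝ → ℝ)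
    (hderiv : ∀ s : ℝ, HasDerivAt f (f' s) s)
    (hf' : Continuous f')
    (M : ℝ → ℝ)
    (hM : ∀ τ, M τ = sSup (f '' Icc 0 τ) + sSup ((fun s => -f s) '' Icc 0 τ)) :
    (∀ T : ℝ, 0 < T → ∃ C : NNReal, LipschitzOnWith C M (Icc 0 T)) ∧
    (∀ᵐ τ ∂(volume.restrict (Ioi (0:ℝ))),
      HasDerivAt M
        ((if f τ = sSup (f '' Icc 0 τ) then f' τ else 0)
          - (if -f τ = sSup ((fun s => -f s) '' Icc 0 τ) then f' τ else 0))
        τ) := by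
  have hf : Continuous f := continuous_iff_continuousAt.2 fun s => (hderiv s).continuousAt
  have hC1 : ContDiff ℝ 1 f := contDiff_one_iff_deriv.2
    ⟨fun s => (hderiv s).differentiableAt, by rwa [funext fun s => (hderiv s).deriv]⟩
  obtain rfl : M = fun τ => runningMax f 0 τ + runningMax (fun s => -f s) 0 τ := funext hM
  refine ⟨fun T _ => ?_, ?_⟩
  · obtain ⟨K, hK⟩ :=
      hC1.locallyLipschitz.locallyLipschitzOn.exists_lipschitzOnWith_of_compact isCompact_Icc
    exact ⟨K + K,
      (lipschitzOnWith_runningMax hf hK).add (lipschitzOnWith_runningMax hf.neg hK.neg)⟩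
  · filter_upwards [ae_hasDerivAt_runningMax hderiv,
      ae_hasDerivAt_runningMax (f := fun s => -f s) fun s => (hderiv s).neg] with τ h₁ h₂
    refine (h₁.add h₂).congr_deriv ?_
    unfold runningMax
    split_ifs <;> ring

/-- Point-detector density formula. For f C^1 with f(0) = 0 and
M(τ) = max_{[0,τ]} f + max_{[0,τ]}(−f), M is locally absolutely continuous
(indeed locally Lipschitz) and for a.e. τ > 0,
M'(τ) = f'(τ)·𝟙[f(τ) = max_{[0,τ]} f] − f'(τ)·𝟙[−f(τ) = max_{[0,τ]}(−f)]. -/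
theorem point_detector_density_formula
    (f f' : ℝ → ℝ)
    (hderiv : ∀ s : ℝ, HasDerivAt f (f' s) s)
    (hf' : Continuous f')
    (hf0 : f 0 = 0)
    (M : ℝ → ℝ)
    (hM : ∀ τ, M τ = sSup (f '' Icc 0 τ) + sSup ((fun s => -f s) '' Icc 0 τ)) :
    (∀ T : ℝ, 0 < T → ∃ C : NNReal, LipschitzOnWith C M (Icc 0 T)) ∧
    (∀ᵐ τ ∂(volume.restrict (Ioi (0:ℝ))),
      HasDerivAt M
        ((if f τ = sSup (f '' Icc 0 τ) then f' τ else 0)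
          - (if -f τ = sSup ((fun s => -f s) '' Icc 0 τ) then f' τ else 0))
        τ) :=
  point_detector_density_formula_general f f' hderiv hf' M hM
end
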